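/- Let (X,σ) be an unbalanced magnetic graph and f in the unit ball of Lip_σ(X). Then f is an extreme point of the unit ball of Lip_σ(X) if and only if every connected component of the magnetic graph H_f of σ-satisfied edges of f is unbalanced. -/

import Mathlib

/-! If `f ± g` both lie in the unit ball, strict convexity of the unit disc forces
`g a = σ a b * g b` on every edge satisfied by `f`: `g` is a parallel section of `σ` over `H_f`.
Such a section vanishes on a vertex of an unbalanced cycle, hence on its whole component.
Conversely, on a balanced component the signature product of a walk depends only on its
endpoints, which yields a nonzero parallel section; since the finitely many unsatisfied edges
have uniform slack, a small multiple of it is a nontrivial perturbation of `f`. -/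

namespace MagneticGraph

variable {V : Type*}

/-- `σ` is a signature on `G`: unimodular on edges and conjugate-symmetric. -/
def IsSignature (G : SimpleGraph V) (σ : V → V → ℂ) : Prop :=
  ∀ u v, G.Adj u v → ‖σ u v‖ = 1 ∧ σ v u = starRingEnd ℂ (σ u v)

/-- Product of the signature along (the darts of) a walk. -/
def sigProd {G : SimpleGraph V} (σ : V → V → ℂ) {u v : V} (w : G.Walk u v) : ℂ :=
  (w.darts.map fun d => σ d.toProd.1 d.toProd.2).prod

/-- `(X,σ)` is unbalanced: some directed cycle has signature product `≠ 1`. -/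
def Unbalanced (G : SimpleGraph V) (σ : V → V → ℂ) : Prop :=
  ∃ (u : V) (w : G.Walk u u), w.IsCycle ∧ sigProd σ w ≠ 1

/-- `(X,σ)` is balanced: every directed cycle has signature product `1`. -/
def Balanced (G : SimpleGraph V) (σ : V → V → ℂ) : Prop :=
  ∀ (u : V) (w : G.Walk u u), w.IsCycle → sigProd σ w = 1

/-- The σ-Lipschitz (semi)norm `max_{u∼v} |f(u) - σ_{uv} f(v)|`. -/
noncomputable def lipNorm (G : SimpleGraph V) (σ : V → V → ℂ) (f : V → ℂ) : ℝ :=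
  sSup {r : ℝ | ∃ u v, G.Adj u v ∧ r = ‖f u - σ u v * f v‖}

/-- The magnetic atom `m^σ_{uv} = δ_u - σ_{uv} δ_v`. -/
def atom [DecidableEq V] (σ : V → V → ℂ) (u v : V) : V → ℂ :=
  fun w => (if w = u then (1 : ℂ) else 0) - σ u v * (if w = v then (1 : ℂ) else 0)

/-- Membership in the magnetic Arens–Eells space: a finite linear combination of atoms. -/
def InAE [DecidableEq V] (G : SimpleGraph V) (σ : V → V → ℂ) (m : V → ℂ) : Prop :=
  ∃ (n : ℕ) (a : Fin n → ℂ) (p q : Fin n → V),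
    (∀ i, G.Adj (p i) (q i)) ∧ m = ∑ i, a i • atom σ (p i) (q i)

/-- The magnetic Arens–Eells norm: infimum of `Σ|aᵢ|` over representations by atoms. -/
noncomputable def aeNorm [DecidableEq V] (G : SimpleGraph V) (σ : V → V → ℂ) (m : V → ℂ) : ℝ :=
  sInf {s : ℝ | ∃ (n : ℕ) (a : Fin n → ℂ) (p q : Fin n → V),
    (∀ i, G.Adj (p i) (q i)) ∧ m = ∑ i, a i • atom σ (p i) (q i) ∧
    s = ∑ i, ‖a i‖}

/-- `f` is an extreme point of the unit ball of `Lip_σ(X)`. -/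
def ExtremePt (G : SimpleGraph V) (σ : V → V → ℂ) (f : V → ℂ) : Prop :=
  lipNorm G σ f ≤ 1 ∧
  ∀ g : V → ℂ, (∀ t : ℝ, t ∈ Set.Icc (-1 : ℝ) 1 → lipNorm G σ (f + t • g) ≤ 1) → g = 0

/-- The graph `H_f` of σ-satisfied edges of `f`. -/
def satGraph (G : SimpleGraph V) (σ : V → V → ℂ) (f : V → ℂ) : SimpleGraph V :=
  SimpleGraph.fromRel fun u v => G.Adj u v ∧ ‖f u - σ u v * f v‖ = 1

/-- Every connected component of `H` is unbalanced: each vertex can reach an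
unbalanced cycle within `H`. -/
def AllComponentsUnbalanced (H : SimpleGraph V) (σ : V → V → ℂ) : Prop :=
  ∀ u : V, ∃ (x : V) (w : H.Walk x x), H.Reachable u x ∧ w.IsCycle ∧ sigProd σ w ≠ 1

open SimpleGraph

section Signature

variable {G H : SimpleGraph V} {σ : V → V → ℂ}

lemma IsSignature.mono (hσ : IsSignature G σ) (hHG : H ≤ G) : IsSignature H σ :=
  fun u v h => hσ u v (hHG h)

lemma IsSignature.mul_swap (hσ : IsSignature G σ) {a b : V} (h : G.Adj a b) :
    σ a b * σ b a = 1 := by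
  rw [(hσ a b h).2, Complex.mul_conj, Complex.normSq_eq_norm_sq, (hσ a b h).1]
  norm_num

lemma IsSignature.norm_sub_mul_comm (hσ : IsSignature G σ) (f : V → ℂ) {a b : V}
    (h : G.Adj a b) : ‖f b - σ b a * f a‖ = ‖f a - σ a b * f b‖ := by
  have hswap : f b - σ b a * f a = -σ b a * (f a - σ a b * f b) := by
    linear_combination -f b * hσ.mul_swap h.symm
  rw [hswap, norm_mul, norm_neg, (hσ b a h.symm).1, one_mul]

end Signature

section SigProd

variable {G : SimpleGraph V} {σ : V → V → ℂ}

@[simp] lemma sigProd_nil {u : V} : sigProd σ (Walk.nil : G.Walk u u) = 1 := rfl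

@[simp] lemma sigProd_cons {u v w : V} (h : G.Adj u v) (p : G.Walk v w) :
    sigProd σ (Walk.cons h p) = σ u v * sigProd σ p := by
  simp [sigProd]

@[simp] lemma sigProd_append {u v w : V} (p : G.Walk u v) (q : G.Walk v w) :
    sigProd σ (p.append q) = sigProd σ p * sigProd σ q := by
  simp [sigProd, Walk.darts_append]

lemma norm_sigProd (hσ : IsSignature G σ) {u v : V} (w : G.Walk u v) :
    ‖sigProd σ w‖ = 1 := by
  induction w with
  | nil => simp
  | cons h p ih => simp [(hσ _ _ h).1, ih]

lemma sigProd_reverse (hσ : IsSignature G σ) {u v : V} (w : G.Walk u v) :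
    sigProd σ w.reverse = starRingEnd ℂ (sigProd σ w) := by
  induction w with
  | nil => simp
  | cons h p ih =>
    rw [Walk.reverse_cons, sigProd_append, ih, sigProd_cons, sigProd_cons, sigProd_nil,
      (hσ _ _ h).2, map_mul, mul_one, mul_comm]

lemma conj_sigProd_mul_self (hσ : IsSignature G σ) {u v : V} (w : G.Walk u v) :
    starRingEnd ℂ (sigProd σ w) * sigProd σ w = 1 := by
  rw [mul_comm, Complex.mul_conj, Complex.normSq_eq_norm_sq, norm_sigProd hσ]
  norm_num

end SigProd

def ComponentBalanced (H : SimpleGraph V) (σ : V → V → ℂ) (r : V) : Prop :=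
  ∀ x (c : H.Walk x x), H.Reachable r x → c.IsCycle → sigProd σ c = 1

section Balanced

variable {H : SimpleGraph V} {σ : V → V → ℂ} {r : V}

lemma sigProd_cons_eq_one_of_isPath (hσ : IsSignature H σ)
    (hcyc : ComponentBalanced H σ r)
    {a b : V} (hab : H.Adj a b) {q : H.Walk b a} (hq : q.IsPath) (ha : H.Reachable r a) :
    sigProd σ (Walk.cons hab q) = 1 := by
  by_cases hedge : s(a, b) ∈ q.edges
  · -- a path from `b` to `a` through the edge `ab` is that edge alone
    cases q with
    | nil => exact (hab.ne rfl).elim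
    | cons hbc t =>
      rename_i c
      rw [Walk.edges_cons, List.mem_cons] at hedge
      rcases hedge with heq | hmem
      · have hca : c = a := by
          rcases Sym2.eq_iff.mp heq with ⟨h1, -⟩ | ⟨h1, -⟩
          · exact absurd h1 hab.ne
          · exact h1.symm
        subst hca
        obtain rfl : t = Walk.nil :=
          Walk.eq_nil_iff_nil.mpr (Walk.isPath_iff_nil.mp hq.of_cons)
        simpa using hσ.mul_swap hab
      · exact absurd (t.snd_mem_support_of_mem_edges hmem)
          (Walk.cons_isPath_iff _ _ |>.mp hq).2
  · exact hcyc a _ ha ((Walk.cons_isCycle_iff q hab).mpr ⟨hq, hedge⟩)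

lemma sigProd_bypass [DecidableEq V] (hσ : IsSignature H σ)
    (hcyc : ComponentBalanced H σ r)
    {a b : V} (w : H.Walk a b) (ha : H.Reachable r a) :
    sigProd σ w.bypass = sigProd σ w := by
  induction w with
  | nil => rfl
  | @cons a c b hac p ih =>
    have hp := ih (ha.trans hac.reachable)
    rw [Walk.bypass, sigProd_cons, ← hp]
    split_ifs with hs
    · -- the bypass cuts off the closed walk `a → c ⇝ a`, which is an edge followed by a path
      have hloop := sigProd_cons_eq_one_of_isPath hσ hcyc hac (p.bypass_isPath.takeUntil hs) ha
      rw [sigProd_cons] at hloop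
      conv_rhs => rw [← p.bypass.take_spec hs, sigProd_append, ← mul_assoc, hloop, one_mul]
    · rfl

lemma sigProd_closed_eq_one (hσ : IsSignature H σ)
    (hcyc : ComponentBalanced H σ r)
    {a : V} (w : H.Walk a a) (ha : H.Reachable r a) : sigProd σ w = 1 := by
  classical
  rw [← sigProd_bypass hσ hcyc w ha,
    Walk.eq_nil_iff_nil.mpr (Walk.isPath_iff_nil.mp w.bypass_isPath), sigProd_nil]

lemma sigProd_eq_of_balanced (hσ : IsSignature H σ)
    (hcyc : ComponentBalanced H σ r)
    {a b : V} (p q : H.Walk a b) (ha : H.Reachable r a) : sigProd σ p = sigProd σ q := by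
  have hclosed := sigProd_closed_eq_one hσ hcyc (p.append q.reverse) ha
  rw [sigProd_append, sigProd_reverse hσ] at hclosed
  linear_combination sigProd σ q * hclosed - sigProd σ p * conj_sigProd_mul_self hσ q

end Balanced

def IsParallel (H : SimpleGraph V) (σ : V → V → ℂ) (g : V → ℂ) : Prop :=
  ∀ a b, H.Adj a b → g a = σ a b * g b

section Parallel

variable {H : SimpleGraph V} {σ : V → V → ℂ} {g : V → ℂ}

lemma IsParallel.eq_sigProd_mul (hg : IsParallel H σ g) {a b : V} (w : H.Walk a b) :
    g a = sigProd σ w * g b := by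
  induction w with
  | nil => simp
  | cons h p ih => rw [hg _ _ h, ih, sigProd_cons, mul_assoc]

lemma IsParallel.eq_zero_of_reachable (hg : IsParallel H σ g) {x v : V} (c : H.Walk x x)
    (hc : sigProd σ c ≠ 1) (hv : H.Reachable v x) : g v = 0 := by
  have hx : g x = 0 := by
    have hgx := hg.eq_sigProd_mul c
    have : (1 - sigProd σ c) * g x = 0 := by linear_combination hgx
    exact (mul_eq_zero.mp this).resolve_left (sub_ne_zero.mpr hc.symm)
  obtain ⟨w⟩ := hv
  rw [hg.eq_sigProd_mul w, hx, mul_zero]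

/-- On a balanced component, `v ↦ sigProd σ (any walk from v to r)` is well defined, and it is
parallel. -/
lemma exists_isParallel_of_balanced (hσ : IsSignature H σ) {r : V}
    (hcyc : ComponentBalanced H σ r) :
    ∃ g, IsParallel H σ g ∧ (∀ v, ‖g v‖ ≤ 1) ∧ g r ≠ 0 := by
  classical
  refine ⟨fun v => if h : H.Reachable v r then sigProd σ h.some else 0, ?_, ?_, ?_⟩
  · intro a b hab
    by_cases hb : H.Reachable b r
    · have ha : H.Reachable a r := hab.reachable.trans hb
      simp only [dif_pos ha, dif_pos hb]
      rw [sigProd_eq_of_balanced hσ hcyc ha.some (Walk.cons hab hb.some) ha.symm, sigProd_cons]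
    · have ha : ¬ H.Reachable a r := fun ha => hb (hab.symm.reachable.trans ha)
      simp only [dif_neg ha, dif_neg hb, mul_zero]
  · intro v
    dsimp only
    split_ifs
    · exact (norm_sigProd hσ _).le
    · simp
  · dsimp only
    rw [dif_pos (Reachable.refl r), ← norm_ne_zero_iff, norm_sigProd hσ]
    exact one_ne_zero

end Parallel

lemma eq_zero_of_norm_add_le_of_norm_sub_le {E : Type*} [NormedAddCommGroup E]
    [InnerProductSpace ℝ E] {x y : E} (hx : ‖x‖ = 1) (hadd : ‖x + y‖ ≤ 1)
    (hsub : ‖x - y‖ ≤ 1) : y = 0 := by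
  have hpar := parallelogram_law_with_norm ℝ x y
  rw [hx] at hpar
  have hy : ‖y‖ ^ 2 ≤ 0 := by
    nlinarith [pow_le_one₀ (n := 2) (norm_nonneg (x + y)) hadd,
      pow_le_one₀ (n := 2) (norm_nonneg (x - y)) hsub]
  exact norm_eq_zero.mp (pow_eq_zero_iff two_ne_zero |>.mp (le_antisymm hy (sq_nonneg _)))

section Lipschitz

variable {G : SimpleGraph V} {σ : V → V → ℂ} {f : V → ℂ}

lemma add_smul_sub_mul_add_smul (f g : V → ℂ) (c : ℝ) (s : ℂ) (a b : V) :
    (f + c • g) a - s * (f + c • g) b = (f a - s * f b) + c • (g a - s * g b) := by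
  simp only [Pi.add_apply, Pi.smul_apply, Complex.real_smul]
  ring

lemma norm_sub_le_lipNorm [Finite V] (F : V → ℂ) {a b : V} (h : G.Adj a b) :
    ‖F a - σ a b * F b‖ ≤ lipNorm G σ F := by
  refine le_csSup ?_ ⟨a, b, h, rfl⟩
  refine (Set.finite_range fun p : V × V => ‖F p.1 - σ p.1 p.2 * F p.2‖).subset ?_ |>.bddAbove
  rintro r ⟨u, v, -, rfl⟩
  exact ⟨(u, v), rfl⟩

lemma lipNorm_le {F : V → ℂ} {c : ℝ} (hc : 0 ≤ c)
    (h : ∀ a b, G.Adj a b → ‖F a - σ a b * F b‖ ≤ c) : lipNorm G σ F ≤ c := by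
  refine Real.sSup_le ?_ hc
  rintro r ⟨a, b, hab, rfl⟩
  exact h a b hab

lemma satGraph_le : satGraph G σ f ≤ G := by
  rintro a b h
  rcases ((fromRel_adj _ _ _).mp h).2 with h | h
  · exact h.1
  · exact h.1.symm

lemma satGraph_adj_iff (hσ : IsSignature G σ) {a b : V} :
    (satGraph G σ f).Adj a b ↔ G.Adj a b ∧ ‖f a - σ a b * f b‖ = 1 := by
  rw [satGraph, fromRel_adj]
  constructor
  · rintro ⟨-, h | ⟨hba, h⟩⟩
    · exact h
    · exact ⟨hba.symm, hσ.norm_sub_mul_comm f hba ▸ h⟩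
  · exact fun h => ⟨h.1.ne, Or.inl h⟩

lemma exists_lt_one_of_not_satGraph_adj [Finite V] (hf : lipNorm G σ f ≤ 1) :
    ∃ δ < 1, ∀ a b, G.Adj a b → ¬ (satGraph G σ f).Adj a b → ‖f a - σ a b * f b‖ ≤ δ := by
  classical
  have := Fintype.ofFinite V
  let unsat : Finset (V × V) :=
    Finset.univ.filter fun p => G.Adj p.1 p.2 ∧ ¬ (satGraph G σ f).Adj p.1 p.2
  obtain ⟨δ, hlt, hδ⟩ := Order.exists_between_finsets
    (unsat.image fun p => ‖f p.1 - σ p.1 p.2 * f p.2‖) {1} <| by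
      intro x hx y hy
      obtain ⟨⟨a, b⟩, hp, rfl⟩ := Finset.mem_image.mp hx
      rw [Finset.mem_singleton.mp hy]
      obtain ⟨hab, hnsat⟩ := (Finset.mem_filter.mp hp).2
      refine (norm_sub_le_lipNorm f hab |>.trans hf).lt_of_ne fun h => hnsat ?_
      exact (fromRel_adj _ _ _).mpr ⟨hab.ne, Or.inl ⟨hab, h⟩⟩
  refine ⟨δ, hδ 1 (Finset.mem_singleton_self 1), fun a b hab hnsat => (hlt _ ?_).le⟩
  exact Finset.mem_image_of_mem (fun p : V × V => ‖f p.1 - σ p.1 p.2 * f p.2‖)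
    (Finset.mem_filter.mpr ⟨Finset.mem_univ (a, b), hab, hnsat⟩)

/-- Unsatisfied edges have slack `1 - δ`, which absorbs a small multiple of a bounded `g`;
on satisfied edges a parallel `g` contributes nothing. -/
lemma exists_lipNorm_add_smul_le_one [Finite V] (hσ : IsSignature G σ)
    (hf : lipNorm G σ f ≤ 1) {g : V → ℂ} (hg : IsParallel (satGraph G σ f) σ g)
    (hgb : ∀ v, ‖g v‖ ≤ 1) :
    ∃ ε : ℝ, 0 < ε ∧ ∀ t ∈ Set.Icc (-1 : ℝ) 1, lipNorm G σ (f + t • ε • g) ≤ 1 := by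
  obtain ⟨δ, hδ1, hδ⟩ := exists_lt_one_of_not_satGraph_adj hf
  refine ⟨(1 - δ) / 2, by linarith, fun t ht => lipNorm_le zero_le_one fun a b hab => ?_⟩
  rw [smul_smul, add_smul_sub_mul_add_smul]
  by_cases hsat : (satGraph G σ f).Adj a b
  · rw [hg a b hsat, sub_self, smul_zero, add_zero]
    exact (norm_sub_le_lipNorm f hab).trans hf
  · have hgab : ‖g a - σ a b * g b‖ ≤ 2 := by
      calc ‖g a - σ a b * g b‖ ≤ ‖g a‖ + ‖σ a b‖ * ‖g b‖ := (norm_sub_le _ _).trans_eq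
            (by rw [norm_mul])
        _ ≤ 2 := by rw [(hσ a b hab).1, one_mul]; linarith [hgb a, hgb b]
    have ht' : |t| ≤ 1 := abs_le.mpr ht
    calc ‖(f a - σ a b * f b) + (t * ((1 - δ) / 2)) • (g a - σ a b * g b)‖
        ≤ δ + |t| * ((1 - δ) / 2) * 2 := by
          refine (norm_add_le _ _).trans (add_le_add (hδ a b hab hsat) ?_)
          rw [norm_smul, Real.norm_eq_abs, abs_mul, abs_of_pos (by linarith : 0 < (1 - δ) / 2)]
          gcongr
      _ ≤ 1 := by nlinarith

lemma isParallel_satGraph_of_segment [Finite V] (hσ : IsSignature G σ) {g : V → ℂ}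
    (hg : ∀ t ∈ Set.Icc (-1 : ℝ) 1, lipNorm G σ (f + t • g) ≤ 1) :
    IsParallel (satGraph G σ f) σ g := by
  intro a b hab
  obtain ⟨hGab, hsat⟩ := (satGraph_adj_iff hσ).mp hab
  have hedge : ∀ t ∈ Set.Icc (-1 : ℝ) 1,
      ‖(f a - σ a b * f b) + t • (g a - σ a b * g b)‖ ≤ 1 := fun t ht => by
    rw [← add_smul_sub_mul_add_smul]
    exact (norm_sub_le_lipNorm _ hGab).trans (hg t ht)
  have hplus := hedge 1 (by norm_num)
  have hminus := hedge (-1) (by norm_num)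
  rw [one_smul] at hplus
  rw [neg_one_smul, ← sub_eq_add_neg] at hminus
  exact sub_eq_zero.mp (eq_zero_of_norm_add_le_of_norm_sub_le hsat hplus hminus)

end Lipschitz

theorem stmt8_general {V : Type*} [Fintype V] (G : SimpleGraph V) (σ : V → V → ℂ)
    (hσ : IsSignature G σ) (f : V → ℂ) (hf : lipNorm G σ f ≤ 1) :
    ExtremePt G σ f ↔ AllComponentsUnbalanced (satGraph G σ f) σ := by
  have hσH : IsSignature (satGraph G σ f) σ := hσ.mono satGraph_le
  constructor
  · intro hext
    by_contra hnot
    simp only [AllComponentsUnbalanced, not_forall, not_exists, not_and, not_not] at hnot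
    obtain ⟨r, hcyc⟩ := hnot
    obtain ⟨g, hg, hgb, hgr⟩ := exists_isParallel_of_balanced hσH hcyc
    obtain ⟨ε, hε, hball⟩ := exists_lipNorm_add_smul_le_one hσ hf hg hgb
    have hzero := congrFun (hext.2 (ε • g) hball) r
    exact smul_ne_zero hε.ne' hgr hzero
  · intro hall
    refine ⟨hf, fun g hg => funext fun v => ?_⟩
    obtain ⟨x, c, hreach, -, hc⟩ := hall v
    exact (isParallel_satGraph_of_segment hσ hg).eq_zero_of_reachable c hc hreach

/-- `f` is an extreme point of the unit ball of `Lip_σ(X)` iff every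
connected component of the satisfied graph `H_f` is unbalanced. -/
theorem stmt8 {V : Type*} [Fintype V] (G : SimpleGraph V) (σ : V → V → ℂ)
    (hσ : IsSignature G σ) (hunb : Unbalanced G σ) (f : V → ℂ) (hf : lipNorm G σ f ≤ 1) :
    ExtremePt G σ f ↔ AllComponentsUnbalanced (satGraph G σ f) σ :=
  stmt8_general G σ hσ f hf

end MagneticGraph
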